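/- arXiv:2402.00436 — 5 statements merged into one kernel-verified Lean document; each statement's English description precedes it below -/
import Mathlib

section
/- Existence of a minimizing sequence of strictly feasible points in a dense subspace: Let X be a nonempty compact topological space, Ȳ a real Banach space, 𝒴 ⊆ Ȳ a dense linear subspace, Ā : Ȳ → C(X,ℝ) a continuous linear map (C(X,ℝ) carrying the supremum norm), g ∈ C(X,ℝ), and T̄ : Ȳ → ℝ a continuous linear functional. Define d* := inf{T̄(w) : w ∈ Ȳ, (Āw)(x) − g(x) ≥ 0 for all x ∈ X} and assume the feasible set is nonempty and d* > −∞. Assume the inward-pointing condition: for every feasible w there exists φ ∈ Ȳ such that Ā(w + θφ) − g > 0 pointwise on X for all θ ∈ (0,1]. Then for every ε > 0 there exists p ∈ 𝒴 which is strictly feasible, i.e. (Āp)(x) − g(x) > 0 for all x ∈ X, and satisfies T̄(p) < d* + ε. -/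
/-- **Existence of a minimizing sequence of strictly feasible points in a dense
subspace.** -/
theorem minimizing_sequence_strictly_feasible
    {X : Type*} [TopologicalSpace X] [CompactSpace X] [Nonempty X]
    {Y : Type*} [NormedAddCommGroup Y] [NormedSpace ℝ Y] [CompleteSpace Y]
    (𝒴 : Submodule ℝ Y) (hdense : Dense (𝒴 : Set Y))
    (A : Y →L[ℝ] C(X, ℝ)) (g : C(X, ℝ)) (T : Y →L[ℝ] ℝ)
    (hfeas : ∃ w : Y, ∀ x : X, 0 ≤ (A w) x - g x)
    (hbdd : BddBelow (T '' {w : Y | ∀ x : X, 0 ≤ (A w) x - g x}))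
    (hinward : ∀ w : Y, (∀ x : X, 0 ≤ (A w) x - g x) →
      ∃ φ : Y, ∀ θ : ℝ, θ ∈ Set.Ioc (0 : ℝ) 1 →
        ∀ x : X, 0 < (A (w + θ • φ)) x - g x)
    (ε : ℝ) (hε : 0 < ε) :
    ∃ p ∈ 𝒴, (∀ x : X, 0 < (A p) x - g x) ∧
      T p < sInf (T '' {w : Y | ∀ x : X, 0 ≤ (A w) x - g x}) + ε := by
  set d := sInf (T '' {w : Y | ∀ x : X, 0 ≤ (A w) x - g x}) with hd
  -- pick a feasible w with T w < d + ε/4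
  have hne : (T '' {w : Y | ∀ x : X, 0 ≤ (A w) x - g x}).Nonempty := by
    obtain ⟨w, hw⟩ := hfeas
    exact ⟨T w, w, hw, rfl⟩
  obtain ⟨y, ⟨w, hwfeas, rfl⟩, hylt⟩ :=
    Real.lt_sInf_add_pos hne (show (0:ℝ) < ε/4 by linarith)
  -- inward direction
  obtain ⟨φ, hφ⟩ := hinward w hwfeas
  -- choose θ ∈ (0,1] small with θ * |T φ| < ε/4
  obtain ⟨θ, hθ0, hθ1, hθsmall⟩ : ∃ θ : ℝ, 0 < θ ∧ θ ≤ 1 ∧ θ * |T φ| < ε/4 := by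
    rcases le_or_gt (|T φ|) 0 with h | h
    · exact ⟨1, one_pos, le_refl 1, by nlinarith⟩
    · refine ⟨min 1 (ε/8 / |T φ|), lt_min one_pos (by positivity), min_le_left _ _, ?_⟩
      calc min 1 (ε/8 / |T φ|) * |T φ| ≤ (ε/8 / |T φ|) * |T φ| := by
            exact mul_le_mul_of_nonneg_right (min_le_right _ _) (abs_nonneg _)
        _ = ε/8 := by field_simp
        _ < ε/4 := by linarith
  set w' := w + θ • φ with hw'
  have hstrict : ∀ x : X, 0 < (A w') x - g x := hφ θ ⟨hθ0, hθ1⟩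
  -- T w' < d + ε/2
  have hTw' : T w' < d + ε/2 := by
    have : T w' = T w + θ * T φ := by simp [hw', map_add, map_smul]
    have h2 : θ * T φ ≤ θ * |T φ| := by
      have := le_abs_self (T φ); nlinarith
    linarith
  -- positive lower bound δ on A w' - g
  have hcont : Continuous fun x : X => (A w') x - g x :=
    ((A w').continuous.sub g.continuous)
  obtain ⟨x₀, -, hx₀⟩ := isCompact_univ.exists_isMinOn Set.univ_nonempty
    (hcont.continuousOn (s := Set.univ))
  set δ := (A w') x₀ - g x₀ with hδdef
  have hδpos : 0 < δ := hstrict x₀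
  -- choose small radius
  set r := min (δ / (‖A‖ + 1)) ((ε/2) / (‖T‖ + 1)) with hr
  have hApos : (0:ℝ) < ‖A‖ + 1 := by positivity
  have hTposn : (0:ℝ) < ‖T‖ + 1 := by positivity
  have hrpos : 0 < r := lt_min (by positivity) (by positivity)
  obtain ⟨p, hp𝒴, hpd⟩ := Metric.mem_closure_iff.1 (hdense w') r hrpos
  rw [dist_comm, dist_eq_norm] at hpd
  refine ⟨p, hp𝒴, ?_, ?_⟩
  · intro x
    have h1 : |(A p) x - (A w') x| ≤ ‖A p - A w'‖ := by
      have := (A p - A w').norm_coe_le_norm x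
      simpa using this
    have h2 : ‖A p - A w'‖ ≤ ‖A‖ * ‖p - w'‖ := by
      rw [← map_sub]; exact A.le_opNorm _
    have h3 : ‖A‖ * ‖p - w'‖ < δ := by
      have hrle : r ≤ δ / (‖A‖ + 1) := min_le_left _ _
      have : ‖A‖ * ‖p - w'‖ ≤ (‖A‖ + 1) * ‖p - w'‖ :=
        mul_le_mul_of_nonneg_right (by linarith [norm_nonneg A]) (norm_nonneg _)
      have h4 : (‖A‖ + 1) * ‖p - w'‖ < (‖A‖ + 1) * (δ / (‖A‖ + 1)) :=
        mul_lt_mul_of_pos_left (lt_of_lt_of_le hpd hrle) hApos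
      have h5 : (‖A‖ + 1) * (δ / (‖A‖ + 1)) = δ := by field_simp
      linarith
    have hmin : δ ≤ (A w') x - g x := hx₀ (Set.mem_univ x)
    have := abs_le.1 (h1.trans h2)
    linarith [this.1]
  · have h1 : |T p - T w'| ≤ ‖T‖ * ‖p - w'‖ := by
      have := T.le_opNorm (p - w')
      simpa [map_sub] using this
    have h3 : ‖T‖ * ‖p - w'‖ < ε/2 := by
      have hrle : r ≤ (ε/2) / (‖T‖ + 1) := min_le_right _ _
      have : ‖T‖ * ‖p - w'‖ ≤ (‖T‖ + 1) * ‖p - w'‖ :=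
        mul_le_mul_of_nonneg_right (by linarith [norm_nonneg T]) (norm_nonneg _)
      have h4 : (‖T‖ + 1) * ‖p - w'‖ < (‖T‖ + 1) * ((ε/2) / (‖T‖ + 1)) :=
        mul_lt_mul_of_pos_left (lt_of_lt_of_le hpd hrle) hTposn
      have h5 : (‖T‖ + 1) * ((ε/2) / (‖T‖ + 1)) = ε/2 := by field_simp
      linarith
    have := abs_le.1 h1
    linarith [this.1]
end

section
/- ε-version of the convergence rate for polynomial optimization: Let m ≥ 2 and h = (h₁,…,h_r) ∈ ℝ[x₁,…,x_m]^r with S(h) nonempty and S(h) ⊆ [−1,1]^m, and assume the effective Putinar hypothesis holds for (h, γ, Ł). Let f ∈ ℝ[x₁,…,x_m] with deg(f) ≥ 1, set f*_X := min_{S(h)} f, ‖f‖ := sup_{[−1,1]^m} |f|, and f^ℓ_X := sup{w ∈ ℝ : f − w ∈ Q_ℓ(h)}. If 0 < ε ≤ ‖f‖ and ℓ ≥ γ·(deg f)^{3.5mŁ}·(3‖f‖/ε)^{2.5mŁ}, then 0 ≤ f*_X − f^ℓ_X ≤ ε. -/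
open MvPolynomial

/-- A polynomial is a sum of squares. -/
def IsSOS {σ : Type*} (q : MvPolynomial σ ℝ) : Prop :=
  ∃ (k : ℕ) (p : Fin k → MvPolynomial σ ℝ), q = ∑ i, (p i) ^ 2

/-- Membership in the truncated quadratic module `Q_ℓ(h)`. -/
def memQM {σ : Type*} {r : ℕ} (h : Fin r → MvPolynomial σ ℝ) (ℓ : ℕ)
    (q : MvPolynomial σ ℝ) : Prop :=
  ∃ (σ₀ : MvPolynomial σ ℝ) (s : Fin r → MvPolynomial σ ℝ),
    IsSOS σ₀ ∧ (∀ i, IsSOS (s i)) ∧ σ₀.totalDegree ≤ 2 * ℓ ∧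
    (∀ i, (s i * h i).totalDegree ≤ 2 * ℓ) ∧ q = σ₀ + ∑ i, s i * h i

/-- The basic closed semialgebraic set `S(h)`. -/
def semialgSet {σ : Type*} {r : ℕ} (h : Fin r → MvPolynomial σ ℝ) :
    Set (σ → ℝ) := {x | ∀ i, 0 ≤ eval x (h i)}

/-- The box `[-1,1]^σ`. -/
def unitBox (σ : Type*) : Set (σ → ℝ) := {x | ∀ i, x i ∈ Set.Icc (-1 : ℝ) 1}

/-- `‖p‖ := sup_{[-1,1]^m} |p|`. -/
noncomputable def polyNorm {σ : Type*} (p : MvPolynomial σ ℝ) : ℝ :=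
  ⨆ x : unitBox σ, |eval (x : σ → ℝ) p|

/-- `min_S p`. -/
noncomputable def polyMinOn {σ : Type*} (S : Set (σ → ℝ)) (p : MvPolynomial σ ℝ) : ℝ :=
  sInf ((fun x => eval x p) '' S)

/-- The effective Putinar hypothesis for `(h, γ, L)`. -/
def EffectivePutinar {σ : Type*} {r : ℕ} (m : ℕ) (h : Fin r → MvPolynomial σ ℝ)
    (γ L : ℝ) : Prop :=
  ∀ (p : MvPolynomial σ ℝ) (ℓ : ℕ),
    0 < polyMinOn (semialgSet h) p →
    γ * (p.totalDegree : ℝ) ^ (3.5 * (m : ℝ) * L) *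
        (polyNorm p / polyMinOn (semialgSet h) p) ^ (2.5 * (m : ℝ) * L) ≤ (ℓ : ℝ) →
    memQM h ℓ p

/- ### Auxiliary lemmas -/

lemma unitBox_eq (σ : Type*) :
    unitBox σ = Set.pi Set.univ (fun _ : σ => Set.Icc (-1 : ℝ) 1) := by
  ext x; simp only [unitBox, Set.mem_setOf_eq, Set.mem_univ_pi]

lemma isCompact_unitBox (σ : Type*) [Finite σ] : IsCompact (unitBox σ) := by
  rw [unitBox_eq]
  exact isCompact_univ_pi fun _ => isCompact_Icc

lemma zero_mem_unitBox (σ : Type*) : (0 : σ → ℝ) ∈ unitBox σ := by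
  intro i; constructor <;> norm_num

lemma isClosed_semialgSet {σ : Type*} [TopologicalSpace σ] {r : ℕ}
    (h : Fin r → MvPolynomial σ ℝ) : IsClosed (semialgSet h) := by
  have : semialgSet h = ⋂ i, (fun x => eval x (h i)) ⁻¹' Set.Ici 0 := by
    ext x; simp [semialgSet]
  rw [this]
  exact isClosed_iInter fun i =>
    (isClosed_Ici).preimage (MvPolynomial.continuous_eval (h i))

lemma abs_eval_le_polyNorm {σ : Type*} [Finite σ] (p : MvPolynomial σ ℝ)
    {x : σ → ℝ} (hx : x ∈ unitBox σ) : |eval x p| ≤ polyNorm p := by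
  have hb : BddAbove (Set.range fun y : unitBox σ => |eval (y : σ → ℝ) p|) := by
    rw [← Set.image_univ]
    have : (fun y : unitBox σ => |eval (y : σ → ℝ) p|) '' Set.univ
        = (fun y => |eval y p|) '' unitBox σ := by
      ext a
      constructor
      · rintro ⟨⟨y, hy⟩, -, rfl⟩; exact ⟨y, hy, rfl⟩
      · rintro ⟨y, hy, rfl⟩; exact ⟨⟨y, hy⟩, trivial, rfl⟩
    rw [this]
    exact ((isCompact_unitBox σ).image
      ((MvPolynomial.continuous_eval p).abs)).bddAbove
  exact le_ciSup hb (⟨x, hx⟩ : unitBox σ)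

lemma polyNorm_nonneg {σ : Type*} [Finite σ] (p : MvPolynomial σ ℝ) :
    0 ≤ polyNorm p :=
  le_trans (abs_nonneg _) (abs_eval_le_polyNorm p (zero_mem_unitBox σ))

lemma polyNorm_sub_C_le {σ : Type*} [Finite σ] [Nonempty σ]
    (p : MvPolynomial σ ℝ) (w : ℝ) :
    polyNorm (p - C w) ≤ polyNorm p + |w| := by
  have hne : Nonempty (unitBox σ) := ⟨⟨0, zero_mem_unitBox σ⟩⟩
  refine ciSup_le fun y => ?_
  have : eval (y : σ → ℝ) (p - C w) = eval (y : σ → ℝ) p - w := by simp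
  rw [this]
  calc |eval (y : σ → ℝ) p - w| ≤ |eval (y : σ → ℝ) p| + |w| := abs_sub _ _
    _ ≤ polyNorm p + |w| :=
      add_le_add_left (abs_eval_le_polyNorm p y.2) _

lemma totalDegree_sub_C_le' {σ : Type*} (p : MvPolynomial σ ℝ) (w : ℝ) :
    (p - C w).totalDegree ≤ p.totalDegree := by
  have : p - C w = p + (-C w) := by ring
  rw [this]
  refine (totalDegree_add _ _).trans ?_
  simp [totalDegree_neg]

lemma eval_isSOS_nonneg {σ : Type*} {q : MvPolynomial σ ℝ} (hq : IsSOS q)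
    (x : σ → ℝ) : 0 ≤ eval x q := by
  obtain ⟨k, p, rfl⟩ := hq
  simp only [map_sum, map_pow]
  exact Finset.sum_nonneg fun i _ => sq_nonneg _

lemma memQM_nonneg {σ : Type*} {r : ℕ} {h : Fin r → MvPolynomial σ ℝ} {ℓ : ℕ}
    {q : MvPolynomial σ ℝ} (hq : memQM h ℓ q) {x : σ → ℝ}
    (hx : x ∈ semialgSet h) : 0 ≤ eval x q := by
  obtain ⟨σ₀, s, hσ₀, hs, -, -, rfl⟩ := hq
  simp only [map_add, map_sum, map_mul]
  refine add_nonneg (eval_isSOS_nonneg hσ₀ x) (Finset.sum_nonneg fun i _ =>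
    mul_nonneg (eval_isSOS_nonneg (hs i) x) (hx i))

/-- **ε-version of the convergence rate for polynomial optimization.** -/
theorem pop_convergence_rate_epsilon
    {m r : ℕ} (hm : 2 ≤ m) (h : Fin r → MvPolynomial (Fin m) ℝ)
    (hne : (semialgSet h).Nonempty)
    (hsub : semialgSet h ⊆ unitBox (Fin m))
    (γ L : ℝ) (hγ : 1 ≤ γ) (hL : 1 ≤ L)
    (hput : EffectivePutinar m h γ L)
    (f : MvPolynomial (Fin m) ℝ) (hdeg : 1 ≤ f.totalDegree)
    (ε : ℝ) (hε0 : 0 < ε) (hεf : ε ≤ polyNorm f) (ℓ : ℕ)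
    (hℓ : γ * (f.totalDegree : ℝ) ^ (3.5 * (m : ℝ) * L) *
        (3 * polyNorm f / ε) ^ (2.5 * (m : ℝ) * L) ≤ (ℓ : ℝ)) :
    0 ≤ polyMinOn (semialgSet h) f - sSup {w : ℝ | memQM h ℓ (f - C w)} ∧
      polyMinOn (semialgSet h) f - sSup {w : ℝ | memQM h ℓ (f - C w)} ≤ ε := by
  haveI : Nonempty (Fin m) := ⟨⟨0, by omega⟩⟩
  set S := semialgSet h with hS
  have hScomp : IsCompact S :=
    ((isCompact_unitBox (Fin m)).of_isClosed_subset (isClosed_semialgSet h) hsub)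
  -- the minimum is attained
  obtain ⟨x₀, hx₀S, hx₀min'⟩ :=
    hScomp.exists_isMinOn hne (MvPolynomial.continuous_eval f).continuousOn
  have hx₀min : ∀ x ∈ S, eval x₀ f ≤ eval x f := fun x hx => hx₀min' hx
  have hbdd : ∀ w : ℝ, BddBelow ((fun x => eval x (f - C w)) '' S) :=
    fun w => (hScomp.image (MvPolynomial.continuous_eval _)).bddBelow
  have hbddf : BddBelow ((fun x => eval x f) '' S) :=
    (hScomp.image (MvPolynomial.continuous_eval _)).bddBelow
  have hminf : polyMinOn S f = eval x₀ f := by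
    refine le_antisymm (csInf_le hbddf ⟨x₀, hx₀S, rfl⟩) ?_
    refine le_csInf (hne.image _) ?_
    rintro b ⟨x, hx, rfl⟩
    exact hx₀min x hx
  -- translation formula for minOn
  have hmin_sub : ∀ w : ℝ, polyMinOn S (f - C w) = polyMinOn S f - w := by
    intro w
    have himg : (fun x => eval x (f - C w)) '' S
        = (fun y => y - w) '' ((fun x => eval x f) '' S) := by
      rw [Set.image_image]
      apply Set.image_congr
      intro x _; simp
    unfold polyMinOn
    rw [himg]
    refine le_antisymm ?_ ?_
    · refine le_sub_iff_add_le.mpr (le_csInf (hne.image _) ?_)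
      rintro b ⟨x, hx, rfl⟩
      have : eval x f - w ∈ (fun y => y - w) '' ((fun x => eval x f) '' S) :=
        ⟨eval x f, ⟨x, hx, rfl⟩, rfl⟩
      have h1 : sInf ((fun y => y - w) '' ((fun x => eval x f) '' S)) ≤ eval x f - w :=
        csInf_le (by
          obtain ⟨c, hc⟩ := hbddf
          exact ⟨c - w, by rintro b ⟨y, hy, rfl⟩; exact sub_le_sub_right (hc hy) w⟩) this
      linarith
    · refine le_csInf ((hne.image _).image _) ?_
      rintro b ⟨y, hy, rfl⟩
      exact sub_le_sub_right (csInf_le hbddf hy) w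
  set fS := polyMinOn S f with hfS
  -- |fS| ≤ polyNorm f
  have hfS_abs : |fS| ≤ polyNorm f := by
    rw [hminf]; exact abs_eval_le_polyNorm f (hsub hx₀S)
  -- every element of the set is ≤ fS
  set A := {w : ℝ | memQM h ℓ (f - C w)} with hA
  have hub : ∀ w ∈ A, w ≤ fS := by
    intro w hw
    have h0 : (0 : ℝ) ≤ eval x₀ (f - C w) := memQM_nonneg hw hx₀S
    have : eval x₀ (f - C w) = eval x₀ f - w := by simp
    rw [this] at h0
    rw [hminf]; linarith
  -- w₀ := fS - ε belongs to A via the effective Putinar hypothesis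
  set w₀ := fS - ε with hw₀
  have hminp : polyMinOn S (f - C w₀) = ε := by
    rw [hmin_sub, hw₀]
    change fS - (fS - ε) = ε
    ring
  have hw₀A : w₀ ∈ A := by
    refine hput (f - C w₀) ℓ (by rw [← hS, hminp]; exact hε0) ?_
    rw [← hS, hminp]
    refine le_trans ?_ hℓ
    have hexp1 : (0 : ℝ) ≤ 3.5 * (m : ℝ) * L := by
      have : (0:ℝ) ≤ (m:ℝ) := Nat.cast_nonneg m
      nlinarith
    have hexp2 : (0 : ℝ) ≤ 2.5 * (m : ℝ) * L := by
      have : (0:ℝ) ≤ (m:ℝ) := Nat.cast_nonneg m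
      nlinarith
    have hd : ((f - C w₀).totalDegree : ℝ) ^ (3.5 * (m : ℝ) * L)
        ≤ (f.totalDegree : ℝ) ^ (3.5 * (m : ℝ) * L) :=
      Real.rpow_le_rpow (Nat.cast_nonneg _)
        (Nat.cast_le.mpr (totalDegree_sub_C_le' f w₀)) hexp1
    have hnorm : polyNorm (f - C w₀) ≤ 3 * polyNorm f := by
      have h1 : polyNorm (f - C w₀) ≤ polyNorm f + |w₀| := polyNorm_sub_C_le f w₀
      have h2 : |w₀| ≤ |fS| + |ε| := abs_sub _ _
      have h3 : |ε| = ε := abs_of_pos hε0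
      nlinarith [hfS_abs]
    have hq : (polyNorm (f - C w₀) / ε) ^ (2.5 * (m : ℝ) * L)
        ≤ (3 * polyNorm f / ε) ^ (2.5 * (m : ℝ) * L) :=
      Real.rpow_le_rpow (div_nonneg (polyNorm_nonneg _) hε0.le)
        (div_le_div_of_nonneg_right hnorm hε0.le) hexp2
    calc γ * ((f - C w₀).totalDegree : ℝ) ^ (3.5 * (m : ℝ) * L) *
          (polyNorm (f - C w₀) / ε) ^ (2.5 * (m : ℝ) * L)
          ≤ γ * (f.totalDegree : ℝ) ^ (3.5 * (m : ℝ) * L) *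
            (3 * polyNorm f / ε) ^ (2.5 * (m : ℝ) * L) := by
            refine mul_le_mul (mul_le_mul le_rfl hd ?_ ?_) hq ?_ ?_
            · exact Real.rpow_nonneg (Nat.cast_nonneg _) _
            · linarith
            · exact Real.rpow_nonneg (div_nonneg (polyNorm_nonneg _) hε0.le) _
            · positivity
        _ = _ := rfl
  have hAne : A.Nonempty := ⟨w₀, hw₀A⟩
  have hAbdd : BddAbove A := ⟨fS, hub⟩
  constructor
  · have : sSup A ≤ fS := csSup_le hAne hub
    linarith
  · have : fS - ε ≤ sSup A := le_csSup hAbdd hw₀A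
    linarith
end

section
/- Inward perturbation of an approximate value function satisfies a strict Hamilton–Jacobi–Bellman inequality: Let Y ⊂ ℝⁿ and U ⊂ ℝ^{m_u} be compact sets, X := Y × U, β > 0, g ∈ ℝ[y,u] a polynomial, and f = (f₁,…,f_n) with each fᵢ ∈ ℝ[y,u]. Let V* be a C¹ function on an open neighborhood of Y satisfying g(y,u) − βV*(y) − f(y,u)·∇V*(y) ≥ 0 for all (y,u) ∈ X. Let d ≥ 1 an integer, c₁ > 0, and V_d ∈ ℝ[y] a polynomial with ‖V_d − V*‖_{C¹(Y)} ≤ c₁/d. Set F := sup_{(y,u)∈X} |f(y,u)| (Euclidean norm) and, for η > 0, define V_{d,η} := V_d − (c₁/d)(1 + F/β) − η. Then (i) ‖V_{d,η} − V*‖_{C¹(Y)} ≤ (2 + F/β)(c₁/d) + η, and (ii) g(y,u) − βV_{d,η}(y) − f(y,u)·∇V_{d,η}(y) ≥ βη for all (y,u) ∈ X. -/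
open MvPolynomial

/-- Evaluation of a polynomial in the variables `(y,u)` at a pair of points. -/
noncomputable def evalYU {n mu : ℕ} (p : MvPolynomial (Fin n ⊕ Fin mu) ℝ)
    (y : Fin n → ℝ) (u : Fin mu → ℝ) : ℝ :=
  eval (Sum.elim y u) p

/-- The partial derivative `∂w/∂y_j`. -/
noncomputable def pd {n : ℕ} (w : (Fin n → ℝ) → ℝ) (j : Fin n)
    (y : Fin n → ℝ) : ℝ :=
  fderiv ℝ w y (Pi.single j 1)

/-- The `C¹(K)` norm: `sup_K |w| + ∑_j sup_K |∂w/∂y_j|`. -/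
noncomputable def C1norm {n : ℕ} (K : Set (Fin n → ℝ))
    (w : (Fin n → ℝ) → ℝ) : ℝ :=
  (⨆ y : K, |w y.1|) + ∑ j : Fin n, ⨆ y : K, |pd w j y.1|

theorem mv_contDiff {n : ℕ} (p : MvPolynomial (Fin n) ℝ) :
    ContDiff ℝ 1 (fun y : Fin n → ℝ => eval y p) := by
  induction p using MvPolynomial.induction_on with
  | C a => simpa using contDiff_const (c := a)
  | add p q hp hq => simpa using hp.add hq
  | mul_X p i hp =>
      simp only [eval_mul, eval_X]
      exact hp.mul ((ContinuousLinearMap.proj i : (Fin n → ℝ) →L[ℝ] ℝ).contDiff)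

/-- **Inward perturbation of an approximate value function satisfies a strict
Hamilton–Jacobi–Bellman inequality.** -/
theorem hjb_inward_perturbation
    {n mu : ℕ} (Y : Set (Fin n → ℝ)) (U : Set (Fin mu → ℝ))
    (hY : IsCompact Y) (hU : IsCompact U)
    (β : ℝ) (hβ : 0 < β)
    (g : MvPolynomial (Fin n ⊕ Fin mu) ℝ)
    (f : Fin n → MvPolynomial (Fin n ⊕ Fin mu) ℝ)
    (Vstar : (Fin n → ℝ) → ℝ)
    (O : Set (Fin n → ℝ)) (hO : IsOpen O) (hYO : Y ⊆ O)
    (hVstar : ContDiffOn ℝ 1 Vstar O)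
    (hHJB : ∀ y ∈ Y, ∀ u ∈ U,
      0 ≤ evalYU g y u - β * Vstar y - ∑ i, evalYU (f i) y u * pd Vstar i y)
    (d : ℕ) (hd : 1 ≤ d) (c₁ : ℝ) (hc₁ : 0 < c₁)
    (Vd : MvPolynomial (Fin n) ℝ)
    (hVd : C1norm Y (fun y => eval y Vd - Vstar y) ≤ c₁ / d)
    (F : ℝ)
    (hF : F = ⨆ p : (Y ×ˢ U : Set ((Fin n → ℝ) × (Fin mu → ℝ))),
      Real.sqrt (∑ i, (evalYU (f i) p.1.1 p.1.2) ^ 2))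
    (η : ℝ) (hη : 0 < η) :
    C1norm Y (fun y =>
        (eval y Vd - (c₁ / d) * (1 + F / β) - η) - Vstar y)
      ≤ (2 + F / β) * (c₁ / d) + η ∧
    ∀ y ∈ Y, ∀ u ∈ U,
      β * η ≤ evalYU g y u - β * (eval y Vd - (c₁ / d) * (1 + F / β) - η)
        - ∑ i, evalYU (f i) y u *
            pd (fun z => eval z Vd - (c₁ / d) * (1 + F / β) - η) i y := by
  have hd0 : (0:ℝ) < d := by exact_mod_cast hd
  have hq0 : 0 < c₁ / d := div_pos hc₁ hd0
  have hF0 : 0 ≤ F := by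
    rw [hF]; exact Real.iSup_nonneg fun p => Real.sqrt_nonneg _
  set A : ℝ := (c₁ / d) * (1 + F / β) + η with hA
  have hA0 : 0 ≤ A := by
    have : 0 ≤ F / β := div_nonneg hF0 hβ.le
    positivity
  set W : (Fin n → ℝ) → ℝ := fun y => eval y Vd - Vstar y with hW
  simp only [C1norm] at hVd
  -- continuity of W on Y and boundedness of |W|
  have hcontW : ContinuousOn W Y :=
    ((mv_contDiff Vd).continuous.continuousOn).sub (hVstar.continuousOn.mono hYO)
  have hbdd0 : BddAbove (Set.range fun y : Y => |W y.1|) := by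
    have := (hY.image_of_continuousOn hcontW.abs).bddAbove
    rwa [Set.image_eq_range] at this
  -- C¹ regularity of W on O and boundedness of the partial derivatives
  have hC1W : ContDiffOn ℝ 1 W O :=
    ((mv_contDiff Vd).contDiffOn).sub hVstar
  have hfd : ContinuousOn (fderiv ℝ W) O :=
    hC1W.continuousOn_fderiv_of_isOpen hO le_rfl
  have hbddj : ∀ j : Fin n, BddAbove (Set.range fun y : Y => |pd W j y.1|) := by
    intro j
    have hc : ContinuousOn (fun z => pd W j z) Y := by
      have h1 : ContinuousOn (fderiv ℝ W) Y := hfd.mono hYO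
      exact h1.clm_apply continuousOn_const
    have := (hY.image_of_continuousOn hc.abs).bddAbove
    rwa [Set.image_eq_range] at this
  have hsupW0 : 0 ≤ ⨆ y : Y, |W y.1| := Real.iSup_nonneg fun y => abs_nonneg _
  have hsumpd0 : 0 ≤ ∑ j : Fin n, ⨆ y : Y, |pd W j y.1| :=
    Finset.sum_nonneg fun j _ => Real.iSup_nonneg fun y => abs_nonneg _
  constructor
  · -- part (i)
    have hfun : (fun y => (eval y Vd - (c₁ / d) * (1 + F / β) - η) - Vstar y)
        = fun y => W y - A := by
      funext y
      have : W y = eval y Vd - Vstar y := rfl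
      rw [this, hA]; ring
    have hpd1 : ∀ (j : Fin n) (z : Fin n → ℝ), pd (fun y => W y - A) j z = pd W j z := by
      intro j z
      simp only [pd, fderiv_sub_const]
    rw [hfun]
    simp only [C1norm, hpd1]
    have hsup : (⨆ y : Y, |W y.1 - A|) ≤ (⨆ y : Y, |W y.1|) + A := by
      rcases isEmpty_or_nonempty Y with h | h
      · simp only [Real.iSup_of_isEmpty]
        linarith
      · refine ciSup_le fun y => ?_
        have h1 : |W y.1 - A| ≤ |W y.1| + A := by
          calc |W y.1 - A| ≤ |W y.1| + |A| := abs_sub _ _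
            _ = |W y.1| + A := by rw [abs_of_nonneg hA0]
        exact h1.trans (add_le_add_left (le_ciSup hbdd0 y) A)
    have hrhs : (2 + F / β) * (c₁ / d) + η = c₁ / d + A := by rw [hA]; ring
    rw [hrhs]
    have t1 : (⨆ y : Y, |W y.1 - A|) + ∑ j : Fin n, ⨆ y : Y, |pd W j y.1|
        ≤ ((⨆ y : Y, |W y.1|) + A) + ∑ j : Fin n, ⨆ y : Y, |pd W j y.1| := by
      linarith
    have t2 : ((⨆ y : Y, |W y.1|) + A) + ∑ j : Fin n, ⨆ y : Y, |pd W j y.1|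
        ≤ c₁ / d + A := by linarith
    exact t1.trans t2
  · -- part (ii)
    intro y hy u hu
    have hpd2 : ∀ (j : Fin n) (z : Fin n → ℝ),
        pd (fun z => eval z Vd - (c₁ / d) * (1 + F / β) - η) j z
          = pd (fun z => eval z Vd) j z := by
      intro j z
      have : (fun z : Fin n → ℝ => eval z Vd - (c₁ / d) * (1 + F / β) - η)
          = fun z => eval z Vd - ((c₁ / d) * (1 + F / β) + η) := by
        funext z; ring
      simp only [pd, this, fderiv_sub_const]
    simp only [hpd2]
    have hdV : DifferentiableAt ℝ (fun z : Fin n → ℝ => eval z Vd) y :=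
      ((mv_contDiff Vd).differentiable one_ne_zero).differentiableAt
    have hdVs : DifferentiableAt ℝ Vstar y :=
      (hVstar.differentiableOn one_ne_zero).differentiableAt (hO.mem_nhds (hYO hy))
    have hsplit : ∀ j : Fin n,
        pd (fun z : Fin n → ℝ => eval z Vd) j y = pd W j y + pd Vstar j y := by
      intro j
      simp only [pd, hW]
      rw [fderiv_fun_sub hdV hdVs]
      simp
    -- |W y| ≤ c₁ / d
    have hWy : |W y| ≤ c₁ / d := by
      have h1 : |W y| ≤ ⨆ z : Y, |W z.1| := le_ciSup hbdd0 ⟨y, hy⟩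
      linarith
    have hW1 : eval y Vd - Vstar y ≤ c₁ / d := by
      have : W y = eval y Vd - Vstar y := rfl
      have := (abs_le.1 hWy).2
      linarith [(abs_le.1 hWy).2]
    -- ∑ |∂W| ≤ c₁ / d
    have hDy : ∑ j : Fin n, |pd W j y| ≤ c₁ / d := by
      have h1 : ∑ j : Fin n, |pd W j y| ≤ ∑ j : Fin n, ⨆ z : Y, |pd W j z.1| :=
        Finset.sum_le_sum fun j _ => le_ciSup (hbddj j) ⟨y, hy⟩
      linarith
    -- |f i (y,u)| ≤ F
    have hcontF : ContinuousOn
        (fun p : (Fin n → ℝ) × (Fin mu → ℝ) =>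
          Real.sqrt (∑ i, (evalYU (f i) p.1 p.2) ^ 2)) (Y ×ˢ U) := by
      apply Continuous.continuousOn
      apply Real.continuous_sqrt.comp
      apply continuous_finset_sum
      intro i _
      have hse : Continuous fun p : (Fin n → ℝ) × (Fin mu → ℝ) =>
          (Sum.elim p.1 p.2 : Fin n ⊕ Fin mu → ℝ) := by
        apply continuous_pi
        rintro (j | j)
        · exact (continuous_apply j).comp continuous_fst
        · exact (continuous_apply j).comp continuous_snd
      have : Continuous fun p : (Fin n → ℝ) × (Fin mu → ℝ) => evalYU (f i) p.1 p.2 :=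
        (MvPolynomial.continuous_eval (f i)).comp hse
      exact this.pow 2
    have hbddF : BddAbove (Set.range
        fun p : (Y ×ˢ U : Set ((Fin n → ℝ) × (Fin mu → ℝ))) =>
          Real.sqrt (∑ i, (evalYU (f i) p.1.1 p.1.2) ^ 2)) := by
      have := ((hY.prod hU).image_of_continuousOn hcontF).bddAbove
      rwa [Set.image_eq_range] at this
    have hfle : ∀ i : Fin n, |evalYU (f i) y u| ≤ F := by
      intro i
      have h1 : |evalYU (f i) y u| = Real.sqrt ((evalYU (f i) y u) ^ 2) :=
        (Real.sqrt_sq_eq_abs _).symm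
      have h2 : Real.sqrt ((evalYU (f i) y u) ^ 2)
          ≤ Real.sqrt (∑ j, (evalYU (f j) y u) ^ 2) := by
        apply Real.sqrt_le_sqrt
        exact Finset.single_le_sum (fun j _ => sq_nonneg (evalYU (f j) y u)) (Finset.mem_univ i)
      have h3 : Real.sqrt (∑ j, (evalYU (f j) y u) ^ 2) ≤ F := by
        rw [hF]
        exact le_ciSup hbddF ⟨(y, u), Set.mk_mem_prod hy hu⟩
      linarith [h1.le]
    have h5 : ∑ i, evalYU (f i) y u * pd W i y ≤ F * (c₁ / d) := by
      calc ∑ i, evalYU (f i) y u * pd W i y ≤ ∑ i, F * |pd W i y| := by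
            apply Finset.sum_le_sum
            intro i _
            calc evalYU (f i) y u * pd W i y
                ≤ |evalYU (f i) y u * pd W i y| := le_abs_self _
              _ = |evalYU (f i) y u| * |pd W i y| := abs_mul _ _
              _ ≤ F * |pd W i y| :=
                  mul_le_mul_of_nonneg_right (hfle i) (abs_nonneg _)
        _ = F * ∑ i, |pd W i y| := (Finset.mul_sum _ _ _).symm
        _ ≤ F * (c₁ / d) := mul_le_mul_of_nonneg_left hDy hF0
    have hS := hHJB y hy u hu
    have hsum : ∑ i, evalYU (f i) y u * pd (fun z : Fin n → ℝ => eval z Vd) i y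
        = ∑ i, evalYU (f i) y u * pd W i y + ∑ i, evalYU (f i) y u * pd Vstar i y := by
      rw [← Finset.sum_add_distrib]
      apply Finset.sum_congr rfl
      intro i _
      rw [hsplit i]; ring
    rw [hsum]
    have hexp : β * (eval y Vd - (c₁ / d) * (1 + F / β) - η)
        = β * eval y Vd - (β * (c₁ / d) + F * (c₁ / d)) - β * η := by
      field_simp
    rw [hexp]
    have h6 : β * eval y Vd - β * Vstar y ≤ β * (c₁ / d) := by
      have := mul_le_mul_of_nonneg_left hW1 hβ.le
      rw [mul_sub] at this
      linarith
    linarith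
end

section
/- Effective feasibility level for the optimal control hierarchy: Let Y ⊂ ℝⁿ, U ⊂ ℝ^{m_u} be compact, X := Y × U = S(h) ⊆ [−1,1]^m (m = n + m_u) with [−b,b]^m ⊆ X for some b ∈ (0,1), β > 0, g ∈ ℝ[y,u], f = (f₁,…,f_n) polynomial. Assume the effective Putinar hypothesis for (h, γ, Ł) and assume that every polynomial p nonnegative on X satisfies sup_{[−1,1]^m} |p| ≤ (1 + (deg p)²/4 · (2/b)^{deg p + 1})·sup_{x∈X} p(x). Let V* be C¹ on a neighborhood of Y with q := g − βV* − f·∇V* ≥ 0 on X and Q := sup_{X} |q|. Let d ≥ max(1, deg g − deg f), c₁ > 0, V_d ∈ ℝ[y] of degree ≤ d with ‖V_d − V*‖_{C¹(Y)} ≤ c₁/d; set F := sup_X |f|, d_f := deg(f) + d, and V_{d,η} := V_d − (c₁/d)(1 + F/β) − η for η > 0. Then g − βV_{d,η} − f·∇V_{d,η} ∈ Q_ℓ(h) for every ℓ ∈ ℕ with ℓ ≥ γ·d_f^{3.5mŁ}·(Q/(βη) + 2(β+F)c₁/(βηd) + 1)^{2.5mŁ}·(1 + (d_f²/4)(2/b)^{d_f+1})^{2.5mŁ}.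 -/
open MvPolynomial

/-- The Hamilton–Jacobi–Bellman polynomial `g - β V - f · ∇V`. -/
noncomputable def hjbPoly {n mu : ℕ} (β : ℝ)
    (g : MvPolynomial (Fin n ⊕ Fin mu) ℝ)
    (f : Fin n → MvPolynomial (Fin n ⊕ Fin mu) ℝ)
    (V : MvPolynomial (Fin n) ℝ) : MvPolynomial (Fin n ⊕ Fin mu) ℝ :=
  g - C β * rename Sum.inl V - ∑ i, f i * rename Sum.inl (pderiv i V)

section AuxLemmas

noncomputable def polyD {n : ℕ} (p : MvPolynomial (Fin n) ℝ) (y : Fin n → ℝ) :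
    (Fin n → ℝ) →L[ℝ] ℝ :=
  ∑ j : Fin n, eval y (pderiv j p) • (ContinuousLinearMap.proj j : (Fin n → ℝ) →L[ℝ] ℝ)

lemma polyD_apply {n : ℕ} (p : MvPolynomial (Fin n) ℝ) (y v : Fin n → ℝ) :
    polyD p y v = ∑ j, eval y (pderiv j p) * v j := by
  simp [polyD]

lemma hasFDerivAt_evalPoly {n : ℕ} (p : MvPolynomial (Fin n) ℝ) (y : Fin n → ℝ) :
    HasFDerivAt (fun y => eval y p) (polyD p y) y := by
  induction p using MvPolynomial.induction_on with
  | C a =>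
      have : polyD (C a : MvPolynomial (Fin n) ℝ) y = 0 := by
        ext v; simp [polyD_apply]
      rw [this]
      simpa using hasFDerivAt_const (a : ℝ) y
  | add p q hp hq =>
      have : polyD (p + q) y = polyD p y + polyD q y := by
        ext v; simp [polyD_apply, add_mul, Finset.sum_add_distrib]
      rw [this]
      simp only [map_add]
      exact hp.add hq
  | mul_X p i hp =>
      have hXi : HasFDerivAt (fun y : Fin n → ℝ => y i)
          (ContinuousLinearMap.proj i : (Fin n → ℝ) →L[ℝ] ℝ) y := by
        exact (ContinuousLinearMap.proj i : (Fin n → ℝ) →L[ℝ] ℝ).hasFDerivAt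
      have h := hp.mul hXi
      have : polyD (p * X i) y =
          eval y p • (ContinuousLinearMap.proj i : (Fin n → ℝ) →L[ℝ] ℝ)
            + y i • polyD p y := by
        ext v
        simp only [ContinuousLinearMap.add_apply, ContinuousLinearMap.smul_apply,
          polyD_apply, smul_eq_mul, ContinuousLinearMap.proj_apply, Finset.mul_sum]
        have hpd : ∀ j, eval y (pderiv j (p * X i))
            = eval y (pderiv j p) * y i + eval y p * (if j = i then 1 else 0) := by
          intro j
          by_cases hji : j = i
          · subst hji; simp [pderiv_mul, pderiv_X, Pi.single_apply]; ring
          · simp [pderiv_mul, pderiv_X, Pi.single_apply, hji, Ne.symm hji, mul_comm]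
        simp only [hpd, add_mul, Finset.sum_add_distrib, ite_mul, one_mul, zero_mul,
          mul_ite, mul_zero, Finset.sum_ite_eq', Finset.mem_univ, if_true]
        rw [add_comm]
        congr 1
        · ring
        · exact Finset.sum_congr rfl fun j _ => by ring
      rw [this]
      simp only [map_mul, eval_X]
      exact h

lemma differentiableAt_evalPoly {n : ℕ} (p : MvPolynomial (Fin n) ℝ) (y : Fin n → ℝ) :
    DifferentiableAt ℝ (fun y => eval y p) y :=
  (hasFDerivAt_evalPoly p y).differentiableAt

lemma pd_evalPoly {n : ℕ} (p : MvPolynomial (Fin n) ℝ) (j : Fin n) (y : Fin n → ℝ) :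
    pd (fun y => eval y p) j y = eval y (pderiv j p) := by
  unfold pd
  rw [(hasFDerivAt_evalPoly p y).fderiv, polyD_apply]
  simp [Pi.single_apply, mul_ite]

lemma pd_sub_evalPoly {n : ℕ} (p : MvPolynomial (Fin n) ℝ) {w : (Fin n → ℝ) → ℝ}
    {y : Fin n → ℝ} (hw : DifferentiableAt ℝ w y) (j : Fin n) :
    pd (fun z => eval z p - w z) j y = eval y (pderiv j p) - pd w j y := by
  unfold pd
  rw [fderiv_fun_sub (differentiableAt_evalPoly p y) hw, ContinuousLinearMap.sub_apply]
  congr 1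
  rw [← pd_evalPoly p j y]
  rfl

lemma le_ciSup_of_mem {α : Type*} [TopologicalSpace α] {K : Set α} (hK : IsCompact K)
    {w : α → ℝ} (hw : ContinuousOn w K) {x : α} (hx : x ∈ K) :
    w x ≤ ⨆ y : K, w y.1 := by
  apply le_ciSup (f := fun y : K => w y.1) ?_ (⟨x, hx⟩ : K)
  rw [← Set.image_eq_range]
  exact (hK.image_of_continuousOn hw).bddAbove

lemma totalDegree_pderiv_le' {n : ℕ} (p : MvPolynomial (Fin n) ℝ) (i : Fin n) :
    (pderiv i p).totalDegree ≤ p.totalDegree := by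
  classical
  conv_lhs => rw [← support_sum_monomial_coeff p]
  rw [map_sum]
  refine (totalDegree_finset_sum _ _).trans ?_
  apply Finset.sup_le
  intro s hs
  rw [pderiv_monomial]
  refine (totalDegree_monomial_le _ _).trans ?_
  have hkey : ((s - Finsupp.single i 1).sum fun _ => id) ≤ s.sum fun _ e => e := by
    rw [Finsupp.sum_fintype _ _ (fun _ => rfl), Finsupp.sum_fintype _ _ (fun _ => rfl)]
    refine Finset.sum_le_sum fun x _ => ?_
    simp only [id_eq, Finsupp.tsub_apply]
    exact Nat.sub_le _ _
  exact hkey.trans (le_totalDegree hs)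

lemma totalDegree_sub_le' {σ : Type*} (p q : MvPolynomial σ ℝ) :
    (p - q).totalDegree ≤ max p.totalDegree q.totalDegree := by
  rw [sub_eq_add_neg]
  exact (totalDegree_add _ _).trans (by rw [totalDegree_neg])

end AuxLemmas

set_option maxHeartbeats 1000000 in
/-- **Effective feasibility level for the optimal control hierarchy.** -/
theorem ocp_effective_feasibility_level
    {n mu r : ℕ} (Y : Set (Fin n → ℝ)) (U : Set (Fin mu → ℝ))
    (hY : IsCompact Y) (hU : IsCompact U)
    (h : Fin r → MvPolynomial (Fin n ⊕ Fin mu) ℝ)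
    (hXS : ∀ (y : Fin n → ℝ) (u : Fin mu → ℝ),
      (y ∈ Y ∧ u ∈ U) ↔ Sum.elim y u ∈ semialgSet h)
    (hsub : semialgSet h ⊆ unitBox (Fin n ⊕ Fin mu))
    (b : ℝ) (hb : b ∈ Set.Ioo (0 : ℝ) 1)
    (hbbox : {z : (Fin n ⊕ Fin mu) → ℝ | ∀ v, z v ∈ Set.Icc (-b) b} ⊆ semialgSet h)
    (β : ℝ) (hβ : 0 < β)
    (g : MvPolynomial (Fin n ⊕ Fin mu) ℝ)
    (f : Fin n → MvPolynomial (Fin n ⊕ Fin mu) ℝ)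
    (γ L : ℝ) (hγ : 1 ≤ γ) (hL : 1 ≤ L)
    (hput : EffectivePutinar (n + mu) h γ L)
    (hnorm : ∀ p : MvPolynomial (Fin n ⊕ Fin mu) ℝ,
      (∀ z ∈ semialgSet h, 0 ≤ eval z p) →
      polyNorm p ≤ (1 + (p.totalDegree : ℝ) ^ 2 / 4 * (2 / b) ^ (p.totalDegree + 1)) *
        ⨆ z : semialgSet h, eval z.1 p)
    (Vstar : (Fin n → ℝ) → ℝ)
    (O : Set (Fin n → ℝ)) (hO : IsOpen O) (hYO : Y ⊆ O)
    (hVstar : ContDiffOn ℝ 1 Vstar O)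
    (hHJB : ∀ y ∈ Y, ∀ u ∈ U,
      0 ≤ evalYU g y u - β * Vstar y - ∑ i, evalYU (f i) y u * pd Vstar i y)
    (Q : ℝ)
    (hQ : Q = ⨆ p : (Y ×ˢ U : Set ((Fin n → ℝ) × (Fin mu → ℝ))),
      |evalYU g p.1.1 p.1.2 - β * Vstar p.1.1 -
        ∑ i, evalYU (f i) p.1.1 p.1.2 * pd Vstar i p.1.1|)
    (d : ℕ) (hd1 : 1 ≤ d)
    (hdg : g.totalDegree - Finset.univ.sup (fun i => (f i).totalDegree) ≤ d)
    (c₁ : ℝ) (hc₁ : 0 < c₁)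
    (Vd : MvPolynomial (Fin n) ℝ) (hVdd : Vd.totalDegree ≤ d)
    (hVd : C1norm Y (fun y => eval y Vd - Vstar y) ≤ c₁ / d)
    (F : ℝ)
    (hF : F = ⨆ p : (Y ×ˢ U : Set ((Fin n → ℝ) × (Fin mu → ℝ))),
      Real.sqrt (∑ i, (evalYU (f i) p.1.1 p.1.2) ^ 2))
    (η : ℝ) (hη : 0 < η)
    (df : ℕ) (hdf : df = Finset.univ.sup (fun i => (f i).totalDegree) + d)
    (ℓ : ℕ)
    (hℓ : γ * (df : ℝ) ^ (3.5 * ((n + mu : ℕ) : ℝ) * L) *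
        (Q / (β * η) + 2 * (β + F) * c₁ / (β * η * d) + 1) ^ (2.5 * ((n + mu : ℕ) : ℝ) * L) *
        (1 + (df : ℝ) ^ 2 / 4 * (2 / b) ^ (df + 1)) ^ (2.5 * ((n + mu : ℕ) : ℝ) * L)
          ≤ (ℓ : ℝ)) :
    memQM h ℓ (hjbPoly β g f (Vd - C ((c₁ / d) * (1 + F / β) + η))) := by
  classical
  have hd0 : (0:ℝ) < d := by exact_mod_cast hd1
  have hdne : (d:ℝ) ≠ 0 := ne_of_gt hd0
  have hb0 : (0:ℝ) < b := hb.1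
  have hb1 : b < 1 := hb.2
  have hβη : (0:ℝ) < β * η := mul_pos hβ hη
  -- nonemptiness of X = S(h)
  have hx0 : (fun _ => (0:ℝ)) ∈ semialgSet h :=
    hbbox fun v => ⟨by linarith, le_of_lt hb0⟩
  have hXne : (semialgSet h).Nonempty := ⟨_, hx0⟩
  haveI hXneI : Nonempty (semialgSet h) := hXne.to_subtype
  have helim : ∀ z : (Fin n ⊕ Fin mu) → ℝ, Sum.elim (z ∘ Sum.inl) (z ∘ Sum.inr) = z := by
    intro z; funext v; cases v <;> rfl
  have hYU : ∀ z ∈ semialgSet h, z ∘ Sum.inl ∈ Y ∧ z ∘ Sum.inr ∈ U := by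
    intro z hz
    exact (hXS _ _).mpr (by rwa [helim z])
  have hKco : IsCompact (Y ×ˢ U : Set ((Fin n → ℝ) × (Fin mu → ℝ))) := hY.prod hU
  -- continuity facts
  have hVc : ContinuousOn Vstar O := hVstar.continuousOn
  have hVdiff : ∀ y ∈ O, DifferentiableAt ℝ Vstar y := fun y hy =>
    (hVstar.differentiableOn one_ne_zero).differentiableAt (hO.mem_nhds hy)
  have hpdVc : ∀ j, ContinuousOn (pd Vstar j) O := fun j =>
    (hVstar.continuousOn_fderiv_of_isOpen hO le_rfl).clm_apply continuousOn_const
  have helimc : Continuous (fun pr : (Fin n → ℝ) × (Fin mu → ℝ) => Sum.elim pr.1 pr.2) := by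
    apply continuous_pi
    intro v
    cases v with
    | inl i => exact (continuous_apply i).comp continuous_fst
    | inr i => exact (continuous_apply i).comp continuous_snd
  have hEc : ∀ q : MvPolynomial (Fin n ⊕ Fin mu) ℝ,
      Continuous fun pr : (Fin n → ℝ) × (Fin mu → ℝ) => evalYU q pr.1 pr.2 := fun q =>
    (MvPolynomial.continuous_eval q).comp helimc
  have hmapsfst : Set.MapsTo Prod.fst (Y ×ˢ U : Set ((Fin n → ℝ) × (Fin mu → ℝ))) O :=
    fun pr hpr => hYO hpr.1
  have hφc : ContinuousOn (fun pr : (Fin n → ℝ) × (Fin mu → ℝ) =>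
      evalYU g pr.1 pr.2 - β * Vstar pr.1 - ∑ i, evalYU (f i) pr.1 pr.2 * pd Vstar i pr.1)
      (Y ×ˢ U) := by
    refine ContinuousOn.sub (ContinuousOn.sub ((hEc g).continuousOn) ?_) ?_
    · exact continuousOn_const.mul (hVc.comp continuous_fst.continuousOn hmapsfst)
    · exact continuousOn_finset_sum _ fun i _ =>
        ((hEc (f i)).continuousOn).mul ((hpdVc i).comp continuous_fst.continuousOn hmapsfst)
  have hQ0 : 0 ≤ Q := by rw [hQ]; exact Real.iSup_nonneg fun _ => abs_nonneg _
  have hF0 : 0 ≤ F := by rw [hF]; exact Real.iSup_nonneg fun _ => Real.sqrt_nonneg _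
  have hQb : ∀ z ∈ semialgSet h,
      evalYU g (z ∘ Sum.inl) (z ∘ Sum.inr) - β * Vstar (z ∘ Sum.inl)
        - ∑ i, evalYU (f i) (z ∘ Sum.inl) (z ∘ Sum.inr) * pd Vstar i (z ∘ Sum.inl) ≤ Q := by
    intro z hz
    rw [hQ]
    refine le_trans (le_abs_self _) ?_
    have h5 := le_ciSup_of_mem (w := fun pr : (Fin n → ℝ) × (Fin mu → ℝ) =>
      |evalYU g pr.1 pr.2 - β * Vstar pr.1 - ∑ i, evalYU (f i) pr.1 pr.2 * pd Vstar i pr.1|)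
      hKco hφc.abs (Set.mk_mem_prod (hYU z hz).1 (hYU z hz).2)
    exact h5
  have hFb : ∀ z ∈ semialgSet h, ∀ i, |eval z (f i)| ≤ F := by
    intro z hz i
    have h1 : |evalYU (f i) (z ∘ Sum.inl) (z ∘ Sum.inr)| ≤
        Real.sqrt (∑ j, (evalYU (f j) (z ∘ Sum.inl) (z ∘ Sum.inr)) ^ 2) := by
      rw [← Real.sqrt_sq_eq_abs]
      exact Real.sqrt_le_sqrt (Finset.single_le_sum
        (f := fun j => (evalYU (f j) (z ∘ Sum.inl) (z ∘ Sum.inr)) ^ 2)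
        (fun j _ => sq_nonneg _) (Finset.mem_univ i))
    have h2 : Real.sqrt (∑ j, (evalYU (f j) (z ∘ Sum.inl) (z ∘ Sum.inr)) ^ 2) ≤ F := by
      rw [hF]
      have hcont : ContinuousOn (fun pr : (Fin n → ℝ) × (Fin mu → ℝ) =>
          Real.sqrt (∑ j, (evalYU (f j) pr.1 pr.2) ^ 2)) (Y ×ˢ U) :=
        (Real.continuous_sqrt.comp
          (continuous_finset_sum _ fun j _ => (hEc (f j)).pow 2)).continuousOn
      have h5 := le_ciSup_of_mem (w := fun pr : (Fin n → ℝ) × (Fin mu → ℝ) =>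
        Real.sqrt (∑ j, (evalYU (f j) pr.1 pr.2) ^ 2))
        hKco hcont (Set.mk_mem_prod (hYU z hz).1 (hYU z hz).2)
      exact h5
    have h3 : evalYU (f i) (z ∘ Sum.inl) (z ∘ Sum.inr) = eval z (f i) := by
      rw [evalYU, helim z]
    rw [← h3]
    exact h1.trans h2
  -- C¹ approximation facts
  have heC : ContinuousOn (fun y => eval y Vd - Vstar y) O :=
    ((MvPolynomial.continuous_eval _).continuousOn).sub hVc
  have hpdeq : ∀ y ∈ O, ∀ j, pd (fun y => eval y Vd - Vstar y) j y
      = eval y (pderiv j Vd) - pd Vstar j y := fun y hy j =>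
    pd_sub_evalPoly Vd (hVdiff y hy) j
  have hpdeC : ∀ j, ContinuousOn (pd (fun y => eval y Vd - Vstar y) j) Y := by
    intro j
    refine ContinuousOn.congr (f := fun y => eval y (pderiv j Vd) - pd Vstar j y) ?_ ?_
    · exact ((MvPolynomial.continuous_eval _).continuousOn).sub ((hpdVc j).mono hYO)
    · intro y hy; exact hpdeq y (hYO hy) j
  have hS0 : ∀ y ∈ Y, |eval y Vd - Vstar y| ≤ ⨆ y : Y, |eval y.1 Vd - Vstar y.1| :=
    fun y hy => le_ciSup_of_mem (w := fun y => |eval y Vd - Vstar y|) hY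
      ((heC.mono hYO).abs) hy
  have hSj : ∀ j, ∀ y ∈ Y, |pd (fun y => eval y Vd - Vstar y) j y| ≤
      ⨆ y : Y, |pd (fun y => eval y Vd - Vstar y) j y.1| :=
    fun j y hy => le_ciSup_of_mem (w := fun y => |pd (fun y => eval y Vd - Vstar y) j y|)
      hY ((hpdeC j).abs) hy
  have hS0nn : 0 ≤ ⨆ y : Y, |eval y.1 Vd - Vstar y.1| :=
    Real.iSup_nonneg fun _ => abs_nonneg _
  have hSjnn : ∀ j, 0 ≤ ⨆ y : Y, |pd (fun y => eval y Vd - Vstar y) j y.1| :=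
    fun j => Real.iSup_nonneg fun _ => abs_nonneg _
  have hsplit : (⨆ y : Y, |eval y.1 Vd - Vstar y.1|)
      + ∑ j, ⨆ y : Y, |pd (fun y => eval y Vd - Vstar y) j y.1| ≤ c₁ / d := hVd
  have hS0le : (⨆ y : Y, |eval y.1 Vd - Vstar y.1|) ≤ c₁ / d :=
    le_trans (le_add_of_nonneg_right (Finset.sum_nonneg fun j _ => hSjnn j)) hsplit
  have hSsumle : (∑ j, ⨆ y : Y, |pd (fun y => eval y Vd - Vstar y) j y.1|) ≤ c₁ / d :=
    le_trans (le_add_of_nonneg_left hS0nn) hsplit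
  set A : ℝ := (c₁ / d) * (1 + F / β) + η with hA
  set P : MvPolynomial (Fin n ⊕ Fin mu) ℝ := hjbPoly β g f (Vd - C A) with hP
  have hβA : β * A = (β + F) * (c₁ / d) + β * η := by
    rw [hA]
    field_simp
  have key : ∀ z ∈ semialgSet h, β * η ≤ eval z P ∧
      eval z P ≤ Q + 2 * ((β + F) * (c₁ / d)) + β * η := by
    intro z hz
    obtain ⟨hy, hu⟩ := hYU z hz
    have hEf : ∀ i, evalYU (f i) (z ∘ Sum.inl) (z ∘ Sum.inr) = eval z (f i) := by
      intro i; rw [evalYU, helim z]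
    have hEg : evalYU g (z ∘ Sum.inl) (z ∘ Sum.inr) = eval z g := by
      rw [evalYU, helim z]
    have hsum3 : ∑ i, eval z (f i) *
          (pd Vstar i (z ∘ Sum.inl) - eval (z ∘ Sum.inl) (pderiv i Vd))
        = (∑ i, eval z (f i) * pd Vstar i (z ∘ Sum.inl))
          - ∑ i, eval z (f i) * eval (z ∘ Sum.inl) (pderiv i Vd) := by
      rw [← Finset.sum_sub_distrib]
      exact Finset.sum_congr rfl fun i _ => mul_sub _ _ _
    have hpdW : ∀ i : Fin n, pderiv i (Vd - C A) = pderiv i Vd := by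
      intro i; rw [map_sub, pderiv_C, sub_zero]
    have hexp : eval z P =
        (evalYU g (z ∘ Sum.inl) (z ∘ Sum.inr) - β * Vstar (z ∘ Sum.inl)
          - ∑ i, evalYU (f i) (z ∘ Sum.inl) (z ∘ Sum.inr) * pd Vstar i (z ∘ Sum.inl))
        + (β * (Vstar (z ∘ Sum.inl) - eval (z ∘ Sum.inl) Vd)
          + ∑ i, eval z (f i) *
              (pd Vstar i (z ∘ Sum.inl) - eval (z ∘ Sum.inl) (pderiv i Vd)))
        + β * A := by
      rw [hP, hjbPoly, hEg]
      simp only [hpdW, eval_sub, eval_mul, eval_C, map_sum, eval_rename, hEf]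
      rw [hsum3]
      ring
    have hq0 : 0 ≤ evalYU g (z ∘ Sum.inl) (z ∘ Sum.inr) - β * Vstar (z ∘ Sum.inl)
        - ∑ i, evalYU (f i) (z ∘ Sum.inl) (z ∘ Sum.inr) * pd Vstar i (z ∘ Sum.inl) :=
      hHJB _ hy _ hu
    have hqQ := hQb z hz
    have herr : |β * (Vstar (z ∘ Sum.inl) - eval (z ∘ Sum.inl) Vd)
        + ∑ i, eval z (f i) *
            (pd Vstar i (z ∘ Sum.inl) - eval (z ∘ Sum.inl) (pderiv i Vd))|
        ≤ (β + F) * (c₁ / d) := by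
      refine (abs_add_le _ _).trans ?_
      have h1 : |β * (Vstar (z ∘ Sum.inl) - eval (z ∘ Sum.inl) Vd)| ≤ β * (c₁ / d) := by
        rw [abs_mul, abs_of_pos hβ, abs_sub_comm]
        exact mul_le_mul_of_nonneg_left ((hS0 _ hy).trans hS0le) hβ.le
      have h2 : |∑ i, eval z (f i) *
            (pd Vstar i (z ∘ Sum.inl) - eval (z ∘ Sum.inl) (pderiv i Vd))|
          ≤ F * (c₁ / d) := by
        refine (Finset.abs_sum_le_sum_abs _ _).trans ?_
        have hterm : ∀ i : Fin n, |eval z (f i) *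
              (pd Vstar i (z ∘ Sum.inl) - eval (z ∘ Sum.inl) (pderiv i Vd))|
            ≤ F * (⨆ y : Y, |pd (fun y => eval y Vd - Vstar y) i y.1|) := by
          intro i
          rw [abs_mul]
          refine mul_le_mul (hFb z hz i) ?_ (abs_nonneg _) hF0
          have hrew : pd Vstar i (z ∘ Sum.inl) - eval (z ∘ Sum.inl) (pderiv i Vd)
              = -(pd (fun y => eval y Vd - Vstar y) i (z ∘ Sum.inl)) := by
            rw [hpdeq _ (hYO hy) i]; ring
          rw [hrew, abs_neg]
          exact hSj i _ hy
        refine (Finset.sum_le_sum fun i _ => hterm i).trans ?_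
        rw [← Finset.mul_sum]
        exact mul_le_mul_of_nonneg_left hSsumle hF0
      have hexpand : (β + F) * (c₁ / d) = β * (c₁ / d) + F * (c₁ / d) := by ring
      linarith
    have habs := abs_le.mp herr
    constructor
    · rw [hexp, hβA]; linarith [habs.1]
    · rw [hexp, hβA]; linarith [habs.2]
  -- min and sup bounds
  have hmin : β * η ≤ polyMinOn (semialgSet h) P := by
    refine le_csInf (hXne.image _) ?_
    rintro _ ⟨z, hz, rfl⟩
    exact (key z hz).1
  have hminpos : 0 < polyMinOn (semialgSet h) P := lt_of_lt_of_le hβη hmin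
  have hPnn : ∀ z ∈ semialgSet h, 0 ≤ eval z P := fun z hz =>
    le_trans hβη.le (key z hz).1
  have hsuple : (⨆ z : semialgSet h, eval z.1 P) ≤ Q + 2 * ((β + F) * (c₁ / d)) + β * η :=
    ciSup_le fun z => (key z.1 z.2).2
  have hsupnn : 0 ≤ ⨆ z : semialgSet h, eval z.1 P :=
    Real.iSup_nonneg fun z => hPnn z.1 z.2
  -- degree bound
  have hdegP : P.totalDegree ≤ df := by
    rw [hP, hjbPoly]
    refine (totalDegree_sub_le' _ _).trans
      (max_le ((totalDegree_sub_le' _ _).trans (max_le ?_ ?_)) ?_)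
    · rw [hdf]; omega
    · refine (totalDegree_mul _ _).trans ?_
      rw [totalDegree_C, zero_add]
      refine (totalDegree_rename_le _ _).trans ?_
      have hW : (Vd - C A).totalDegree ≤ d :=
        (totalDegree_sub_le' _ _).trans (max_le hVdd (by rw [totalDegree_C]; omega))
      omega
    · refine (totalDegree_finset_sum _ _).trans ?_
      refine Finset.sup_le fun i _ => ?_
      refine (totalDegree_mul _ _).trans ?_
      have h1 : (f i).totalDegree ≤ Finset.univ.sup (fun i => (f i).totalDegree) :=
        Finset.le_sup (f := fun i => (f i).totalDegree) (Finset.mem_univ i)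
      have h2 : (rename (Sum.inl : Fin n → Fin n ⊕ Fin mu) (pderiv i (Vd - C A))).totalDegree ≤ d := by
        refine (totalDegree_rename_le _ _).trans ?_
        rw [map_sub, pderiv_C, sub_zero]
        exact (totalDegree_pderiv_le' _ _).trans hVdd
      omega
  -- norm bound
  have hpnn : 0 ≤ polyNorm P := Real.iSup_nonneg fun _ => abs_nonneg _
  have h2b : (1:ℝ) ≤ 2 / b := by rw [le_div_iff₀ hb0]; linarith
  have hR2nn : (0:ℝ) ≤ 1 + (df:ℝ)^2/4 * (2/b)^(df+1) := by positivity
  have hfac : (1 + (P.totalDegree : ℝ) ^ 2 / 4 * (2 / b) ^ (P.totalDegree + 1))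
      ≤ 1 + (df : ℝ) ^ 2 / 4 * (2 / b) ^ (df + 1) := by
    have hcast : (P.totalDegree : ℝ) ≤ (df : ℝ) := Nat.cast_le.mpr hdegP
    gcongr
  have hpn : polyNorm P ≤ (1 + (df:ℝ)^2/4*(2/b)^(df+1)) * (⨆ z : semialgSet h, eval z.1 P) :=
    le_trans (hnorm P hPnn) (mul_le_mul_of_nonneg_right hfac hsupnn)
  -- ratio bound
  have hβFnn : (0:ℝ) ≤ β + F := by linarith
  have hMnn : (0:ℝ) ≤ Q + 2*((β+F)*(c₁/d)) + β*η := by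
    have h1 : (0:ℝ) ≤ (β+F)*(c₁/d) := mul_nonneg hβFnn (by positivity)
    linarith
  have hratio : polyNorm P / polyMinOn (semialgSet h) P ≤
      (Q / (β * η) + 2 * (β + F) * c₁ / (β * η * d) + 1)
        * (1 + (df:ℝ)^2/4*(2/b)^(df+1)) := by
    have h1 : polyNorm P / polyMinOn (semialgSet h) P ≤
        ((1 + (df:ℝ)^2/4*(2/b)^(df+1)) * (Q + 2*((β+F)*(c₁/d)) + β*η)) / (β*η) := by
      refine div_le_div₀ (mul_nonneg hR2nn hMnn) ?_ hβη hmin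
      exact hpn.trans (mul_le_mul_of_nonneg_left hsuple hR2nn)
    refine h1.trans (le_of_eq ?_)
    field_simp
  -- conclusion via effective Putinar
  refine hput P ℓ hminpos ?_
  have hE1 : (0:ℝ) ≤ 3.5 * ((n + mu : ℕ) : ℝ) * L :=
    mul_nonneg (mul_nonneg (by norm_num) (Nat.cast_nonneg _)) (by linarith)
  have hE2 : (0:ℝ) ≤ 2.5 * ((n + mu : ℕ) : ℝ) * L :=
    mul_nonneg (mul_nonneg (by norm_num) (Nat.cast_nonneg _)) (by linarith)
  have hdeg' : ((P.totalDegree : ℝ)) ^ (3.5 * ((n + mu : ℕ) : ℝ) * L)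
      ≤ ((df:ℝ)) ^ (3.5 * ((n + mu : ℕ) : ℝ) * L) :=
    Real.rpow_le_rpow (Nat.cast_nonneg _) (Nat.cast_le.mpr hdegP) hE1
  have hrat0 : 0 ≤ polyNorm P / polyMinOn (semialgSet h) P := div_nonneg hpnn hminpos.le
  have hR1nn : 0 ≤ Q / (β*η) + 2*(β+F)*c₁/(β*η*d) + 1 := by
    have h1 : (0:ℝ) ≤ Q/(β*η) := div_nonneg hQ0 hβη.le
    have h2 : (0:ℝ) ≤ 2*(β+F)*c₁/(β*η*d) := by
      refine div_nonneg ?_ ?_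
      · nlinarith
      · nlinarith
    linarith
  have hrat' : (polyNorm P / polyMinOn (semialgSet h) P) ^ (2.5 * ((n + mu : ℕ) : ℝ) * L)
      ≤ (Q/(β*η) + 2*(β+F)*c₁/(β*η*d) + 1) ^ (2.5 * ((n + mu : ℕ) : ℝ) * L)
        * (1 + (df:ℝ)^2/4*(2/b)^(df+1)) ^ (2.5 * ((n + mu : ℕ) : ℝ) * L) := by
    rw [← Real.mul_rpow hR1nn hR2nn]
    exact Real.rpow_le_rpow hrat0 hratio hE2
  refine le_trans ?_ hℓ
  have hγ0 : (0:ℝ) ≤ γ := by linarith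
  calc γ * (P.totalDegree : ℝ) ^ (3.5 * ((n + mu : ℕ) : ℝ) * L)
        * (polyNorm P / polyMinOn (semialgSet h) P) ^ (2.5 * ((n + mu : ℕ) : ℝ) * L)
      ≤ γ * (df:ℝ) ^ (3.5 * ((n + mu : ℕ) : ℝ) * L)
        * ((Q/(β*η) + 2*(β+F)*c₁/(β*η*d) + 1) ^ (2.5 * ((n + mu : ℕ) : ℝ) * L)
          * (1 + (df:ℝ)^2/4*(2/b)^(df+1)) ^ (2.5 * ((n + mu : ℕ) : ℝ) * L)) := by
        refine mul_le_mul (mul_le_mul_of_nonneg_left hdeg' hγ0) hrat'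
          (Real.rpow_nonneg hrat0 _) ?_
        exact mul_nonneg hγ0 (Real.rpow_nonneg (Nat.cast_nonneg _) _)
    _ = γ * (df : ℝ) ^ (3.5 * ((n + mu : ℕ) : ℝ) * L) *
        (Q / (β * η) + 2 * (β + F) * c₁ / (β * η * d) + 1) ^ (2.5 * ((n + mu : ℕ) : ℝ) * L) *
        (1 + (df : ℝ) ^ 2 / 4 * (2 / b) ^ (df + 1)) ^ (2.5 * ((n + mu : ℕ) : ℝ) * L) := by
        ring
end

section
/- Comparison of sup norms of a nonnegative polynomial on nested boxes: Let m ≥ 1, b ∈ (0,1), and X ⊆ [−1,1]^m a set with [−b,b]^m ⊆ X. Assume that for every polynomial φ ∈ ℝ[x₁,…,x_m] of degree k that is nonnegative on [−1,1]^m and every ρ > 0, one has min_{[−1−ρ,1+ρ]^m} φ ≥ min_{[−1,1]^m} φ − T_k(1+ρ)·ρ·k²·max_{[−1,1]^m} φ, where T_k is the k-th Chebyshev polynomial of the first kind. Then every polynomial p ∈ ℝ[x₁,…,x_m] that is nonnegative on X satisfies sup_{x∈[−1,1]^m} |p(x)| ≤ (1 + (deg p)²/4 · (2/b)^{deg p +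 1}) · sup_{x∈X} p(x). -/
open MvPolynomial

section helpers
open Polynomial.Chebyshev

private lemma myT_facts (t : ℝ) (ht : 1 ≤ t) : ∀ n : ℕ,
    1 ≤ (T ℝ n).eval t ∧ (T ℝ n).eval t ≤ (T ℝ (n + 1)).eval t := by
  intro n
  induction n with
  | zero => simp [T_zero, T_one]; exact ht
  | succ n ih =>
    have h2 : (T ℝ ((n : ℤ) + 1 + 1)).eval t = 2 * t * (T ℝ ((n:ℤ) + 1)).eval t - (T ℝ n).eval t := by
      rw [show ((n:ℤ) + 1 + 1) = (n:ℤ) + 2 by ring, T_add_two]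
      simp
    constructor
    · exact ih.1.trans ih.2
    · push_cast
      rw [h2]
      nlinarith [ih.1, ih.2]

private lemma myT_le (t : ℝ) (ht : 1 ≤ t) : ∀ n : ℕ,
    (T ℝ (n + 1)).eval t ≤ 2 ^ n * t ^ (n + 1) := by
  intro n
  induction n with
  | zero => simp [T_one]
  | succ n ih =>
    have h2 : (T ℝ ((n : ℤ) + 1 + 1)).eval t = 2 * t * (T ℝ ((n:ℤ) + 1)).eval t - (T ℝ n).eval t := by
      rw [show ((n:ℤ) + 1 + 1) = (n:ℤ) + 2 by ring, T_add_two]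
      simp
    push_cast
    rw [h2]
    have h0 : (1:ℝ) ≤ (T ℝ n).eval t := (myT_facts t ht n).1
    have := mul_le_mul_of_nonneg_left ih (by positivity : (0:ℝ) ≤ 2 * t)
    push_cast at this
    have heq : 2 * t * (2 ^ n * t ^ (n + 1)) = 2 ^ (n + 1) * t ^ (n + 1 + 1) := by ring
    linarith

private lemma myT_bound (t : ℝ) (ht : 1 ≤ t) {k d : ℕ} (hkd : k ≤ d) :
    (T ℝ k).eval t * (t - 1) * (k : ℝ) ^ 2 ≤ (d : ℝ) ^ 2 / 4 * (2 * t) ^ (d + 1) := by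
  cases k with
  | zero => simp; positivity
  | succ j =>
    obtain ⟨e, rfl⟩ : ∃ e, d = e + 1 := ⟨d - 1, by omega⟩
    have hje : j ≤ e := by omega
    have hT : (T ℝ ((j:ℕ) + 1 : ℕ)).eval t ≤ 2 ^ j * t ^ (j + 1) := by
      have := myT_le t ht j
      push_cast at this ⊢
      exact this
    have hT1 : 1 ≤ (T ℝ ((j:ℕ) + 1 : ℕ)).eval t := (myT_facts t ht (j+1)).1
    have h1 : (T ℝ ((j:ℕ) + 1 : ℕ)).eval t * (t - 1) ≤ (2 ^ j * t ^ (j + 1)) * t :=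
      mul_le_mul hT (by linarith) (by linarith) (by positivity)
    have h2 : ((j:ℝ) + 1) ^ 2 ≤ ((e:ℝ) + 1) ^ 2 := by
      have : (j:ℝ) + 1 ≤ (e:ℝ) + 1 := by exact_mod_cast Nat.succ_le_succ hje
      nlinarith [Nat.cast_nonneg (α := ℝ) j]
    have h3 : (T ℝ ((j:ℕ) + 1 : ℕ)).eval t * (t - 1) * ((j:ℝ) + 1) ^ 2
        ≤ ((2 ^ j * t ^ (j + 1)) * t) * ((e:ℝ) + 1) ^ 2 :=
      mul_le_mul h1 h2 (by positivity) (by positivity)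
    have h4 : (2:ℝ) ^ j * t ^ (j + 1) * t ≤ 2 ^ e * t ^ (e + 1) * t := by
      have e1 : (2:ℝ) ^ j ≤ 2 ^ e := pow_le_pow_right₀ one_le_two hje
      have e2 : t ^ (j + 1) ≤ t ^ (e + 1) := pow_le_pow_right₀ ht (by omega)
      have := mul_le_mul e1 e2 (by positivity) (by positivity)
      nlinarith
    have h5 : ((2:ℝ) ^ e * t ^ (e + 1) * t) * ((e:ℝ) + 1) ^ 2
        = ((e:ℝ) + 1) ^ 2 / 4 * (2 * t) ^ (e + 1 + 1) := by ring
    have h6 := mul_le_mul_of_nonneg_right h4 (by positivity : (0:ℝ) ≤ ((e:ℝ) + 1) ^ 2)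
    push_cast
    calc (T ℝ ((j:ℤ) + 1)).eval t * (t - 1) * ((j:ℝ) + 1) ^ 2
        = (T ℝ ((j:ℕ) + 1 : ℕ)).eval t * (t - 1) * ((j:ℝ) + 1) ^ 2 := by push_cast; ring_nf
      _ ≤ ((2 ^ j * t ^ (j + 1)) * t) * ((e:ℝ) + 1) ^ 2 := h3
      _ ≤ ((2:ℝ) ^ e * t ^ (e + 1) * t) * ((e:ℝ) + 1) ^ 2 := h6
      _ = ((e:ℝ) + 1) ^ 2 / 4 * (2 * t) ^ (e + 1 + 1) := h5

private lemma deg_scale {σ : Type*} (b : ℝ) (p : MvPolynomial σ ℝ) :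
    (aeval (fun i => C b * X i : σ → MvPolynomial σ ℝ) p).totalDegree ≤ p.totalDegree := by
  conv_lhs => rw [p.as_sum]
  rw [map_sum]
  refine totalDegree_finsetSum_le fun α hα => ?_
  rw [aeval_monomial]
  refine le_trans (totalDegree_mul _ _) ?_
  rw [algebraMap_eq, totalDegree_C, zero_add]
  refine le_trans (totalDegree_finset_prod _ _) (le_trans ?_ (le_totalDegree hα))
  rw [Finsupp.sum]
  refine Finset.sum_le_sum fun i _ => ?_
  refine le_trans (totalDegree_pow _ _) ?_
  have h1 : (C b * X i : MvPolynomial σ ℝ).totalDegree ≤ 1 := by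
    refine le_trans (totalDegree_mul _ _) ?_
    simp
  calc α i * (C b * X i : MvPolynomial σ ℝ).totalDegree ≤ α i * 1 := Nat.mul_le_mul_left _ h1
    _ = α i := Nat.mul_one _

private lemma boxCompact (m : ℕ) (c d : ℝ) :
    IsCompact {x : Fin m → ℝ | ∀ i, x i ∈ Set.Icc c d} := by
  have h : {x : Fin m → ℝ | ∀ i, x i ∈ Set.Icc c d} = Set.Icc (fun _ => c) (fun _ => d) := by
    ext x
    simp [Set.mem_Icc, Pi.le_def, forall_and]
  rw [h]
  exact isCompact_Icc

end helpers

/-- **Comparison of sup norms of a nonnegative polynomial on nested boxes.** -/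
theorem nonneg_poly_sup_norm_comparison
    {m : ℕ} (hm : 1 ≤ m) (b : ℝ) (hb : b ∈ Set.Ioo (0 : ℝ) 1)
    (X : Set (Fin m → ℝ)) (hXsub : X ⊆ unitBox (Fin m))
    (hbX : {x : Fin m → ℝ | ∀ i, x i ∈ Set.Icc (-b) b} ⊆ X)
    (hcheb : ∀ φ : MvPolynomial (Fin m) ℝ,
      (∀ x ∈ unitBox (Fin m), 0 ≤ eval x φ) → ∀ ρ : ℝ, 0 < ρ →
      (⨅ x : unitBox (Fin m), eval x.1 φ) -
          Polynomial.eval (1 + ρ) (Polynomial.Chebyshev.T ℝ φ.totalDegree) * ρ *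
            (φ.totalDegree : ℝ) ^ 2 * ⨆ x : unitBox (Fin m), eval x.1 φ
        ≤ ⨅ x : {x : Fin m → ℝ | ∀ i, x i ∈ Set.Icc (-1 - ρ) (1 + ρ)}, eval x.1 φ)
    (p : MvPolynomial (Fin m) ℝ) (hp : ∀ x ∈ X, 0 ≤ eval x p) :
    polyNorm p ≤
      (1 + (p.totalDegree : ℝ) ^ 2 / 4 * (2 / b) ^ (p.totalDegree + 1)) *
        ⨆ x : X, eval x.1 p := by
  obtain ⟨hb0, hb1⟩ := hb
  have hbne : b ≠ 0 := ne_of_gt hb0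
  set d := p.totalDegree with hd
  set ρ : ℝ := b⁻¹ - 1 with hρdef
  have htinv : 1 < b⁻¹ := by rw [lt_inv_comm₀] <;> simpa
  have hρ : 0 < ρ := by simp [hρdef]; linarith
  have h1ρ : 1 + ρ = b⁻¹ := by ring
  set B : ℝ := (d : ℝ) ^ 2 / 4 * (2 / b) ^ (d + 1) with hBdef
  have hB0 : 0 ≤ B := by positivity
  -- basic set facts
  have hKcomp : IsCompact (unitBox (Fin m)) := boxCompact m (-1) 1
  have h0K : (0 : Fin m → ℝ) ∈ unitBox (Fin m) := by
    intro i; constructor <;> norm_num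
  haveI hKne : Nonempty (unitBox (Fin m)) := ⟨⟨0, h0K⟩⟩
  have h0X : (0 : Fin m → ℝ) ∈ X := by
    apply hbX
    intro i
    constructor <;> simp <;> linarith
  -- boundedness facts
  have hbddK : ∀ q : MvPolynomial (Fin m) ℝ,
      BddAbove ((fun x => eval x q) '' unitBox (Fin m)) := fun q =>
    hKcomp.bddAbove_image (MvPolynomial.continuous_eval _).continuousOn
  have hMbdd : BddAbove (Set.range fun x : X => eval x.1 p) := by
    rw [show (Set.range fun x : X => eval x.1 p) = (fun x => eval x p) '' X from
      (Set.image_eq_range (fun x => eval x p) X).symm]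
    exact (hbddK p).mono (Set.image_mono hXsub)
  set M : ℝ := ⨆ x : X, eval x.1 p with hMdef
  have hM : ∀ x ∈ X, eval x p ≤ M := fun x hx => le_ciSup hMbdd ⟨x, hx⟩
  have hM0 : 0 ≤ M := le_trans (hp 0 h0X) (hM 0 h0X)
  -- the key consequence of hcheb
  have key : ∀ q : MvPolynomial (Fin m) ℝ, q.totalDegree ≤ d →
      (∀ x ∈ unitBox (Fin m), 0 ≤ eval x q) →
      (∀ x ∈ unitBox (Fin m), eval x q ≤ M) →
      ∀ z ∈ {x : Fin m → ℝ | ∀ i, x i ∈ Set.Icc (-1 - ρ) (1 + ρ)}, -(B * M) ≤ eval z q := by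
    intro q hdq hq0 hqM z hz
    have h := hcheb q hq0 ρ hρ
    have hinf0 : 0 ≤ ⨅ x : unitBox (Fin m), eval x.1 q := le_ciInf fun x => hq0 x.1 x.2
    have hsupM : (⨆ x : unitBox (Fin m), eval x.1 q) ≤ M := ciSup_le fun x => hqM x.1 x.2
    have hT1 : 1 ≤ Polynomial.eval (1 + ρ) (Polynomial.Chebyshev.T ℝ q.totalDegree) := by
      have := (myT_facts (1 + ρ) (by linarith) q.totalDegree).1
      exact this
    have hTpos : 0 ≤ Polynomial.eval (1 + ρ) (Polynomial.Chebyshev.T ℝ q.totalDegree) * ρ *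
        (q.totalDegree : ℝ) ^ 2 := by positivity
    have hTB : Polynomial.eval (1 + ρ) (Polynomial.Chebyshev.T ℝ q.totalDegree) * ρ *
        (q.totalDegree : ℝ) ^ 2 ≤ B := by
      have hb2 : 2 / b = 2 * b⁻¹ := by field_simp
      have := myT_bound b⁻¹ (le_of_lt htinv) hdq
      rw [hBdef, hb2, h1ρ]
      convert this using 3 <;> rw [hρdef]
    have hsup0 : 0 ≤ ⨆ x : unitBox (Fin m), eval x.1 q := by
      refine le_trans (hq0 0 h0K) ?_
      have hbq : BddAbove (Set.range fun x : unitBox (Fin m) => eval x.1 q) := by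
        rw [show (Set.range fun x : unitBox (Fin m) => eval x.1 q)
            = (fun x => eval x q) '' unitBox (Fin m) from (Set.image_eq_range (fun x => eval x q) (unitBox (Fin m))).symm]
        exact hbddK q
      exact le_ciSup hbq (⟨0, h0K⟩ : unitBox (Fin m))
    have hmul : Polynomial.eval (1 + ρ) (Polynomial.Chebyshev.T ℝ q.totalDegree) * ρ *
        (q.totalDegree : ℝ) ^ 2 * (⨆ x : unitBox (Fin m), eval x.1 q) ≤ B * M := by
      calc _ ≤ Polynomial.eval (1 + ρ) (Polynomial.Chebyshev.T ℝ q.totalDegree) * ρ *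
            (q.totalDegree : ℝ) ^ 2 * M := mul_le_mul_of_nonneg_left hsupM hTpos
        _ ≤ B * M := mul_le_mul_of_nonneg_right hTB hM0
    have hEbdd : BddBelow (Set.range
        fun x : {x : Fin m → ℝ | ∀ i, x i ∈ Set.Icc (-1 - ρ) (1 + ρ)} => eval x.1 q) := by
      rw [show (Set.range fun x : {x : Fin m → ℝ | ∀ i, x i ∈ Set.Icc (-1 - ρ) (1 + ρ)} =>
          eval x.1 q) = (fun x => eval x q) '' {x : Fin m → ℝ | ∀ i, x i ∈ Set.Icc (-1 - ρ) (1 + ρ)}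
          from (Set.image_eq_range (fun x => eval x q)
            {x : Fin m → ℝ | ∀ i, x i ∈ Set.Icc (-1 - ρ) (1 + ρ)}).symm]
      exact (boxCompact m (-1 - ρ) (1 + ρ)).bddBelow_image
        (MvPolynomial.continuous_eval _).continuousOn
    have hiEz : (⨅ x : {x : Fin m → ℝ | ∀ i, x i ∈ Set.Icc (-1 - ρ) (1 + ρ)}, eval x.1 q)
        ≤ eval z q := ciInf_le hEbdd ⟨z, hz⟩
    linarith
  -- the scaled polynomial
  set φ : MvPolynomial (Fin m) ℝ := aeval (fun i => C b * MvPolynomial.X i) p with hφdef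
  have heval : ∀ y : Fin m → ℝ, eval y φ = eval (fun i => b * y i) p := by
    intro y
    have hh : (eval y).comp ((aeval (fun i => C b * MvPolynomial.X i :
        Fin m → MvPolynomial (Fin m) ℝ)) : MvPolynomial (Fin m) ℝ →ₐ[ℝ]
        MvPolynomial (Fin m) ℝ).toRingHom = eval (fun i => b * y i) := by
      apply ringHom_ext <;> simp
    exact RingHom.congr_fun hh p
  have hbmem : ∀ y ∈ unitBox (Fin m), (fun i => b * y i) ∈ X := by
    intro y hy
    apply hbX
    intro i
    obtain ⟨h1, h2⟩ := hy i
    simp only [Set.mem_setOf_eq, Set.mem_Icc]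
    constructor <;> nlinarith
  have hφ0 : ∀ x ∈ unitBox (Fin m), 0 ≤ eval x φ := by
    intro x hx; rw [heval]; exact hp _ (hbmem x hx)
  have hφM : ∀ x ∈ unitBox (Fin m), eval x φ ≤ M := by
    intro x hx; rw [heval]; exact hM _ (hbmem x hx)
  have hdφ : φ.totalDegree ≤ d := deg_scale b p
  -- the reflected polynomial
  set ψ : MvPolynomial (Fin m) ℝ := C M - φ with hψdef
  have hψeval : ∀ y : Fin m → ℝ, eval y ψ = M - eval y φ := by intro y; simp [hψdef]
  have hψ0 : ∀ x ∈ unitBox (Fin m), 0 ≤ eval x ψ := by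
    intro x hx; rw [hψeval]; linarith [hφM x hx]
  have hψM : ∀ x ∈ unitBox (Fin m), eval x ψ ≤ M := by
    intro x hx; rw [hψeval]; linarith [hφ0 x hx]
  have hdψ : ψ.totalDegree ≤ d := by
    refine le_trans (totalDegree_sub _ _) ?_
    simp [hdφ]
  -- putting it together
  have habs : ∀ x ∈ unitBox (Fin m), |eval x p| ≤ (1 + B) * M := by
    intro x hx
    set z : Fin m → ℝ := fun i => b⁻¹ * x i with hzdef
    have hzE : z ∈ {x : Fin m → ℝ | ∀ i, x i ∈ Set.Icc (-1 - ρ) (1 + ρ)} := by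
      intro i
      obtain ⟨h1, h2⟩ := hx i
      have hbi : 0 < b⁻¹ := inv_pos.mpr hb0
      simp only [Set.mem_Icc, hzdef]
      constructor
      · have h3 : -b⁻¹ ≤ b⁻¹ * x i := by nlinarith
        linarith [h3, h1ρ]
      · have h3 : b⁻¹ * x i ≤ b⁻¹ := by nlinarith
        linarith [h3, h1ρ]
    have hzφ : eval z φ = eval x p := by
      rw [heval]
      have hzx : (fun i => b * z i) = x := by
        funext i
        show b * (b⁻¹ * x i) = x i
        exact mul_inv_cancel_left₀ hbne (x i)
      rw [hzx]
    have l1 : -(B * M) ≤ eval x p := by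
      have := key φ hdφ hφ0 hφM z hzE
      rwa [hzφ] at this
    have l2 : eval x p ≤ M + B * M := by
      have := key ψ hdψ hψ0 hψM z hzE
      rw [hψeval, hzφ] at this
      linarith
    rw [abs_le]
    constructor <;> nlinarith
  rw [polyNorm]
  exact ciSup_le fun x => habs x.1 x.2
end
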